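/- arXiv:2206.01054 — 3 statements merged into one kernel-verified Lean document; each statement's English description precedes it below -/
import Mathlib

section
/- Let G be a finite group, x ∈ G, and π an automorphism of the directed reduced power graph →RP(G). If the ≃-class x̂ is of Type IV with parameter (p,q), then the ≃-class of x^π is also of Type IV with parameter (p,q). -/
open Subgroup Set

variable (G : Type*) [Group G]

/-- Arc of the directed reduced power graph `→RP(G)`: from `x` to `y` iff `⟨y⟩ ⊊ ⟨x⟩`. -/
def rpArc (x y : G) : Prop := zpowers y < zpowers x

/-- Adjacency in the undirected reduced power graph `RP(G)`:
`x` and `y` are adjacent iff `⟨x⟩ ⊊ ⟨y⟩` or `⟨y⟩ ⊊ ⟨x⟩`. -/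
def rpAdj (x y : G) : Prop := zpowers x < zpowers y ∨ zpowers y < zpowers x

/-- `x ≃ y` iff `x` and `y` have the same neighbourhood in `RP(G)`. -/
def simEq (x y : G) : Prop := ∀ z : G, rpAdj G x z ↔ rpAdj G y z

/-- The `≃`-class `x̂` of `x`. -/
def hatCls (x : G) : Set G := {y | simEq G y x}

/-- The `∼`-class `[x]` of `x`: the set of generators of `⟨x⟩`. -/
def genCls (x : G) : Set G := {y | zpowers y = zpowers x}

/-- The automorphism group of the directed reduced power graph `→RP(G)`,
as a subgroup of the permutations of `G`. -/
def DRPAut : Subgroup (Equiv.Perm G) where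
  carrier := {π | ∀ x y : G, rpArc G (π x) (π y) ↔ rpArc G x y}
  one_mem' := fun _ _ => Iff.rfl
  mul_mem' := by
    intro a b ha hb x y
    simp only [Equiv.Perm.mul_apply]
    exact (ha (b x) (b y)).trans (hb x y)
  inv_mem' := by
    intro a ha x y
    have h := ha (a⁻¹ x) (a⁻¹ y)
    simp only [Equiv.Perm.coe_inv, Equiv.apply_symm_apply] at h
    exact h.symm

/-- The automorphism group of the undirected reduced power graph `RP(G)`,
as a subgroup of the permutations of `G`. -/
def RPAut : Subgroup (Equiv.Perm G) where
  carrier := {π | ∀ x y : G, rpAdj G (π x) (π y) ↔ rpAdj G x y}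
  one_mem' := fun _ _ => Iff.rfl
  mul_mem' := by
    intro a b ha hb x y
    simp only [Equiv.Perm.mul_apply]
    exact (ha (b x) (b y)).trans (hb x y)
  inv_mem' := by
    intro a ha x y
    have h := ha (a⁻¹ x) (a⁻¹ y)
    simp only [Equiv.Perm.coe_inv, Equiv.apply_symm_apply] at h
    exact h.symm

/-- `⟨x⟩` is a maximal cyclic subgroup of `G`. -/
def IsMaxCyc (x : G) : Prop := ∀ y : G, zpowers x ≤ zpowers y → zpowers x = zpowers y

/-- The `≃`-class of `x` is of Type I: it is a single `∼`-class, `x̂ = [x]`. -/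
def TypeI (x : G) : Prop := hatCls G x = genCls G x

/-- The `≃`-class of `x` is of Type II: it is a union of `r ≥ 2` `∼`-classes whose
cyclic subgroups are distinct maximal cyclic subgroups of `G`, all of the same order. -/
def TypeII (x : G) : Prop :=
  (∃ y z : G, simEq G y x ∧ simEq G z x ∧ zpowers y ≠ zpowers z) ∧
  ∀ y : G, simEq G y x → IsMaxCyc G y ∧ orderOf y = orderOf x

/-- The `≃`-class of `x` is of Type III: `G` is non-cyclic, the class is a union of
`r ≥ 2` `∼`-classes whose cyclic subgroups are maximal cyclic subgroups of prime order,
and at least two distinct orders occur. -/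
def TypeIII (x : G) : Prop :=
  ¬ IsCyclic G ∧
  (∃ y z : G, simEq G y x ∧ simEq G z x ∧ orderOf y ≠ orderOf z) ∧
  ∀ y : G, simEq G y x → IsMaxCyc G y ∧ (orderOf y).Prime

/-- The `≃`-class of `x` is of Type IV with parameter `(p, q)`: it is a union of exactly
two `∼`-classes of elements of distinct prime orders `p` and `q`, the corresponding cyclic
subgroups being non-maximal when `G` is non-cyclic, and maximal when `G` is cyclic. -/
def TypeIV (x : G) (p q : ℕ) : Prop :=
  p.Prime ∧ q.Prime ∧ p ≠ q ∧
  (∃ x₁ x₂ : G, simEq G x₁ x ∧ simEq G x₂ x ∧ orderOf x₁ = p ∧ orderOf x₂ = q ∧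
     ∀ y : G, simEq G y x → zpowers y = zpowers x₁ ∨ zpowers y = zpowers x₂) ∧
  ((¬ IsCyclic G ∧ ∀ y : G, simEq G y x → ¬ IsMaxCyc G y) ∨
   (IsCyclic G ∧ ∀ y : G, simEq G y x → IsMaxCyc G y))

/-- A `P(G)`-permutation: a permutation `σ` of `G` preserving element orders, mapping each
`∼`-class `[x]` onto `[x^σ]`, and preserving inclusion and non-inclusion of cyclic subgroups. -/
def IsPPerm (σ : Equiv.Perm G) : Prop :=
  (∀ x : G, orderOf (σ x) = orderOf x) ∧
  (∀ x : G, σ '' genCls G x = genCls G (σ x)) ∧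
  (∀ x y : G, zpowers y ≤ zpowers x ↔ zpowers (σ y) ≤ zpowers (σ x))

/-- A permutation of `G` fixing every `≃`-class setwise. -/
def FixesClasses (τ : Equiv.Perm G) : Prop := ∀ x : G, simEq G (τ x) x

/-!
The cyclic alternative of Type IV is void (both `⟨x₁⟩` and `⟨x₂⟩` would be `G`), so `G` is not
cyclic and `⟨x₁⟩ < ⟨u⟩` for some `u`; as `x₂ ≃ x₁`, also `⟨x₂⟩ < ⟨u⟩`. The element `w ∈ ⟨u⟩` of
order `pq` has out-neighbourhood `N⁺(w) = {1} ∪ x̂` in `→RP(G)`, and since `N⁺(w)` generates `⟨w⟩`,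
the elements with out-neighbourhood `N⁺(w)` are exactly those of `[w]`. An automorphism `π` carries
this to `w' = w^π`: `N⁺(w') = {1} ∪ ŷ` for `y = x^π`, and as many elements share the
out-neighbourhood of `w'` as that of `w`. There is no arc inside `ŷ`, so every nontrivial proper
cyclic subgroup of `⟨w'⟩` has prime order and `o(w') = rs` with `r, s` prime. Comparing
`o(v) = |[v]| + |N⁺(v)|` for `v = w, w'` excludes `r = s` and gives `o(w') = pq` otherwise; then
`ŷ = [w'^q] ∪ [w'^p]`.
-/

theorem Nat.eq_one_or_of_dvd_prime_mul_prime {d p q : ℕ} (hp : p.Prime) (hq : q.Prime)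
    (h : d ∣ p * q) : d = 1 ∨ d = p ∨ d = q ∨ d = p * q := by
  obtain ⟨a, b, ha, hb, rfl⟩ := Nat.dvd_mul.mp h
  rcases (Nat.dvd_prime hp).mp ha with rfl | rfl <;>
    rcases (Nat.dvd_prime hq).mp hb with rfl | rfl <;> simp

/-- `N⁺(v)`, the out-neighbourhood of `v` in `→RP(G)`. -/
def rpOut (v : G) : Set G := {z | rpArc G v z}

def sameOut (v : G) : Set G := {u | rpOut G u = rpOut G v}

section

variable {G}

theorem mem_rpOut {v z : G} : z ∈ rpOut G v ↔ zpowers z < zpowers v := Iff.rfl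

theorem ncard_zpowers (v : G) : (zpowers v : Set G).ncard = orderOf v :=
  (Nat.card_coe_set_eq _).symm.trans (Nat.card_zpowers v)

theorem zpowers_eq_of_mem_of_orderOf_eq [Finite G] {v z : G} (hz : z ∈ zpowers v)
    (h : orderOf z = orderOf v) : zpowers z = zpowers v :=
  eq_of_le_of_card_ge (zpowers_le.mpr hz) (by rw [Nat.card_zpowers, Nat.card_zpowers, h])

theorem zpowers_lt_zpowers_iff [Finite G] {v z : G} :
    zpowers z < zpowers v ↔ z ∈ zpowers v ∧ orderOf z ≠ orderOf v := by
  refine ⟨fun h => ⟨zpowers_le.mp h.le, fun ho => h.ne ?_⟩, fun ⟨hz, ho⟩ => ?_⟩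
  · exact zpowers_eq_of_mem_of_orderOf_eq (zpowers_le.mp h.le) ho
  · refine lt_of_le_of_ne (zpowers_le.mpr hz) fun h => ho ?_
    rw [← Nat.card_zpowers, h, Nat.card_zpowers]

theorem orderOf_pow_of_orderOf_eq_mul {w : G} {p q : ℕ} (hw : orderOf w = p * q) (hq : q ≠ 0) :
    orderOf (w ^ q) = p := by
  rw [orderOf_pow_of_dvd hq (hw ▸ dvd_mul_left q p), hw,
    Nat.mul_div_cancel p (Nat.pos_of_ne_zero hq)]

theorem mem_zpowers_pow_of_pow_eq_one {u z : G} {r s : ℕ} (hu : orderOf u = r * s) (hr : r ≠ 0)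
    (hz : z ∈ zpowers u) (h : z ^ r = 1) : z ∈ zpowers (u ^ s) := by
  obtain ⟨k, rfl⟩ := mem_zpowers_iff.mp hz
  have hdvd : ((s : ℤ) * r) ∣ k * r := by
    rw [mul_comm (s : ℤ), ← Nat.cast_mul, ← hu, orderOf_dvd_iff_zpow_eq_one, zpow_mul, zpow_natCast]
    exact h
  obtain ⟨m, rfl⟩ := (mul_dvd_mul_iff_right (Int.natCast_ne_zero.mpr hr)).mp hdvd
  exact mem_zpowers_iff.mpr ⟨m, by rw [← zpow_natCast, ← zpow_mul]⟩

theorem zpowers_eq_zpowers_of_orderOf_eq [Finite G] {u a b : G} (ha : a ∈ zpowers u)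
    (hb : b ∈ zpowers u) (h : orderOf a = orderOf b) : zpowers a = zpowers b := by
  have key : ∀ c ∈ zpowers u, zpowers c = zpowers (u ^ (orderOf u / orderOf c)) := by
    intro c hc
    have hdvd := orderOf_dvd_of_mem_zpowers hc
    refine zpowers_eq_of_mem_of_orderOf_eq ?_
      (orderOf_pow_orderOf_div (orderOf_pos u).ne' hdvd).symm
    exact mem_zpowers_pow_of_pow_eq_one (Nat.mul_div_cancel' hdvd).symm (orderOf_pos c).ne' hc
      (pow_orderOf_eq_one c)
  rw [key a ha, key b hb, h]

theorem one_mem_rpOut {v : G} (h : v ≠ 1) : 1 ∈ rpOut G v := by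
  rw [mem_rpOut, zpowers_one_eq_bot, bot_lt_iff_ne_bot]
  exact mt zpowers_eq_bot.mp h

theorem rpOut_one : rpOut G 1 = ∅ :=
  Set.eq_empty_of_forall_notMem fun z hz => by
    rw [mem_rpOut, zpowers_one_eq_bot] at hz
    exact not_lt_bot hz

theorem zpowers_lt_iff_of_orderOf_eq_mul [Finite G] {w z : G} {p q : ℕ} (hp : p.Prime)
    (hq : q.Prime) (hw : orderOf w = p * q) :
    zpowers z < zpowers w ↔ z = 1 ∨ zpowers z = zpowers (w ^ q) ∨ zpowers z = zpowers (w ^ p) := by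
  have hwq : orderOf (w ^ q) = p := orderOf_pow_of_orderOf_eq_mul hw hq.ne_zero
  have hwp : orderOf (w ^ p) = q :=
    orderOf_pow_of_orderOf_eq_mul (hw.trans (mul_comm p q)) hp.ne_zero
  constructor
  · intro hz
    obtain ⟨hzw, hne⟩ := zpowers_lt_zpowers_iff.mp hz
    rcases Nat.eq_one_or_of_dvd_prime_mul_prime hp hq (hw ▸ orderOf_dvd_of_mem_zpowers hzw) with
      h | h | h | h
    · exact Or.inl (orderOf_eq_one_iff.mp h)
    · exact Or.inr (Or.inl (zpowers_eq_zpowers_of_orderOf_eq hzw (pow_mem (mem_zpowers w) q)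
        (h.trans hwq.symm)))
    · exact Or.inr (Or.inr (zpowers_eq_zpowers_of_orderOf_eq hzw (pow_mem (mem_zpowers w) p)
        (h.trans hwp.symm)))
    · exact absurd (h.trans hw.symm) hne
  · rintro (rfl | h | h)
    · refine one_mem_rpOut fun hw1 => hp.ne_one ?_
      rw [hw1, orderOf_one] at hw
      exact Nat.eq_one_of_mul_eq_one_right hw.symm
    · rw [h, zpowers_lt_zpowers_iff, hwq, hw]
      exact ⟨pow_mem (mem_zpowers w) q, (lt_mul_of_one_lt_right hp.pos hq.one_lt).ne⟩
    · rw [h, zpowers_lt_zpowers_iff, hwp, hw]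
      exact ⟨pow_mem (mem_zpowers w) p, (lt_mul_of_one_lt_left hq.pos hp.one_lt).ne⟩

theorem card_genCls_add_card_rpOut [Finite G] (v : G) :
    (genCls G v).ncard + (rpOut G v).ncard = orderOf v := by
  have hunion : genCls G v ∪ rpOut G v = (zpowers v : Set G) := by
    ext z
    rw [Set.mem_union, SetLike.mem_coe, ← zpowers_le, le_iff_eq_or_lt]
    rfl
  have hdisj : Disjoint (genCls G v) (rpOut G v) :=
    Set.disjoint_left.mpr fun z (hz : zpowers z = zpowers v) hlt => hlt.ne hz
  rw [← Set.ncard_union_eq hdisj, hunion, ncard_zpowers]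

theorem orderOf_le_card_rpOut [Finite G] {a v : G} (h : zpowers a < zpowers v) :
    orderOf a ≤ (rpOut G v).ncard := by
  rw [← ncard_zpowers]
  exact Set.ncard_le_ncard fun z hz => lt_of_le_of_lt (zpowers_le.mpr hz) h

theorem genCls_subset_sameOut (v : G) : genCls G v ⊆ sameOut G v :=
  fun u (hu : zpowers u = zpowers v) => Set.ext fun z => by rw [mem_rpOut, mem_rpOut, hu]

theorem sameOut_eq_genCls_of_mem_closure {v : G} (hv : v ∈ closure (rpOut G v)) :
    sameOut G v = genCls G v := by
  refine Set.Subset.antisymm (fun u (hu : rpOut G u = rpOut G v) => ?_) (genCls_subset_sameOut v)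
  have hle : zpowers v ≤ zpowers u := by
    refine zpowers_le.mpr (closure_le _ |>.mpr ?_ hv)
    rw [← hu]
    exact fun z hz => zpowers_le.mp (mem_rpOut.mp hz).le
  refine (hle.eq_or_lt.resolve_right fun hlt => ?_).symm
  have hself : v ∈ rpOut G v := hu ▸ mem_rpOut.mpr hlt
  exact lt_irrefl _ (mem_rpOut.mp hself)

theorem mem_closure_rpOut_of_orderOf_eq_mul [Finite G] {v : G} {r s : ℕ} (hrs : r.Coprime s)
    (hr : r ≠ 1) (hs : s ≠ 1) (hv : orderOf v = r * s) : v ∈ closure (rpOut G v) := by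
  have hr0 : r ≠ 0 := fun h => (orderOf_pos v).ne' (by rw [hv, h, zero_mul])
  have hs0 : s ≠ 0 := fun h => (orderOf_pos v).ne' (by rw [hv, h, mul_zero])
  have hor : orderOf (v ^ r) = s := orderOf_pow_of_orderOf_eq_mul (hv.trans (mul_comm r s)) hr0
  have hos : orderOf (v ^ s) = r := orderOf_pow_of_orderOf_eq_mul hv hs0
  have hmem : ∀ k, orderOf (v ^ k) ≠ orderOf v → v ^ k ∈ closure (rpOut G v) := fun k hk =>
    subset_closure (zpowers_lt_zpowers_iff.mpr ⟨pow_mem (mem_zpowers v) k, hk⟩)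
  have hgen : zpowers (v ^ r * v ^ s) = zpowers v := by
    refine zpowers_eq_of_mem_of_orderOf_eq (mul_mem (pow_mem (mem_zpowers v) r)
      (pow_mem (mem_zpowers v) s)) ?_
    rw [(Commute.pow_pow_self v r s).orderOf_mul_eq_mul_orderOf_of_coprime (by rwa [hor, hos,
      Nat.coprime_comm]), hor, hos, hv, mul_comm]
  rw [← zpowers_le, ← hgen, zpowers_le]
  refine mul_mem (hmem r ?_) (hmem s ?_)
  · rw [hor, hv]
    exact fun h => hr ((mul_eq_right₀ hs0).mp h.symm)
  · rw [hos, hv]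
    exact fun h => hs ((mul_eq_left₀ hr0).mp h.symm)

theorem simEq.symm {a b : G} (h : simEq G a b) : simEq G b a := fun z => (h z).symm

theorem simEq.trans {a b c : G} (h : simEq G a b) (h' : simEq G b c) : simEq G a c :=
  fun z => (h z).trans (h' z)

theorem simEq_of_zpowers_eq {a b : G} (h : zpowers a = zpowers b) : simEq G a b := fun z => by
  simp only [rpAdj, h]

theorem not_zpowers_lt_of_simEq {a b : G} (h : simEq G a b) : ¬ zpowers a < zpowers b := fun hlt =>
  ((h b).mp (Or.inl hlt)).elim (lt_irrefl _) (lt_irrefl _)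

theorem zpowers_pow_minFac_lt [Finite G] {z : G} (h : z ≠ 1) :
    zpowers (z ^ (orderOf z).minFac) < zpowers z := by
  rw [zpowers_lt_zpowers_iff, orderOf_pow_of_dvd (Nat.minFac_pos _).ne' (Nat.minFac_dvd _)]
  refine ⟨pow_mem (mem_zpowers z) _, (Nat.div_lt_self (orderOf_pos z) ?_).ne⟩
  exact (Nat.minFac_prime (mt orderOf_eq_one_iff.mp h)).one_lt

theorem pow_minFac_ne_one {z : G} (h : z ≠ 1) (hz : ¬ (orderOf z).Prime) :
    z ^ (orderOf z).minFac ≠ 1 := fun h1 => hz <| by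
  rw [Nat.dvd_antisymm (orderOf_dvd_of_pow_eq_one h1) (Nat.minFac_dvd _)]
  exact Nat.minFac_prime (mt orderOf_eq_one_iff.mp h)

theorem eq_one_of_zpowers_lt_of_prime [Finite G] {v z : G} (hv : (orderOf v).Prime)
    (hz : zpowers z < zpowers v) : z = 1 := by
  obtain ⟨hmem, hne⟩ := zpowers_lt_zpowers_iff.mp hz
  exact orderOf_eq_one_iff.mp
    (((Nat.dvd_prime hv).mp (orderOf_dvd_of_mem_zpowers hmem)).resolve_right hne)

theorem exists_orderOf_eq_prime_mul_prime [Finite G] {v a : G}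
    (hprime : ∀ z, zpowers z < zpowers v → z ≠ 1 → (orderOf z).Prime)
    (ha : a ≠ 1) (hav : zpowers a < zpowers v) :
    ∃ r s : ℕ, r.Prime ∧ s.Prime ∧ orderOf v = r * s := by
  have hv : v ≠ 1 := by
    rintro rfl
    rw [zpowers_one_eq_bot] at hav
    exact not_lt_bot hav
  have hnp : ¬ (orderOf v).Prime := fun hp => ha (eq_one_of_zpowers_lt_of_prime hp hav)
  have hlt := zpowers_pow_minFac_lt hv
  refine ⟨_, _, Nat.minFac_prime (mt orderOf_eq_one_iff.mp hv),
    hprime _ hlt (pow_minFac_ne_one hv hnp), ?_⟩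
  rw [orderOf_pow_of_dvd (Nat.minFac_pos _).ne' (Nat.minFac_dvd _),
    Nat.mul_div_cancel' (Nat.minFac_dvd _)]

theorem card_rpOut_le_of_orderOf_eq_sq [Finite G] {v : G} {r : ℕ} (hr : r.Prime)
    (hv : orderOf v = r ^ 2) : (rpOut G v).ncard ≤ r := by
  have hsub : rpOut G v ⊆ zpowers (v ^ r) := fun z hz => by
    obtain ⟨hmem, hne⟩ := zpowers_lt_zpowers_iff.mp hz
    obtain ⟨k, hk, hzk⟩ := (Nat.dvd_prime_pow hr).mp (hv ▸ orderOf_dvd_of_mem_zpowers hmem)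
    have hk2 : k ≠ 2 := by
      rintro rfl
      exact hne (hzk.trans hv.symm)
    have hdvd : orderOf z ∣ r := by
      rw [hzk]
      exact (pow_dvd_pow r (by omega : k ≤ 1)).trans (pow_one r).dvd
    exact mem_zpowers_pow_of_pow_eq_one (hv.trans (sq r)) hr.ne_zero hmem
      (orderOf_dvd_iff_pow_eq_one.mp hdvd)
  calc (rpOut G v).ncard ≤ (zpowers (v ^ r) : Set G).ncard := Set.ncard_le_ncard hsub
    _ = r := by rw [ncard_zpowers, orderOf_pow_of_orderOf_eq_mul (hv.trans (sq r)) hr.ne_zero]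

theorem zpowers_lt_iff_of_rpOut_eq {v y z : G} (hvy : rpOut G v = insert 1 (hatCls G y)) :
    zpowers z < zpowers v ↔ z = 1 ∨ simEq G z y := by
  rw [← mem_rpOut, hvy]
  rfl

theorem orderOf_prime_of_rpOut_eq [Finite G] {v y z : G} (hvy : rpOut G v = insert 1 (hatCls G y))
    (hz : zpowers z < zpowers v) (h1 : z ≠ 1) : (orderOf z).Prime := by
  by_contra hnp
  have hlt := zpowers_pow_minFac_lt h1
  have hsim : ∀ a, zpowers a < zpowers v → a ≠ 1 → simEq G a y := fun a ha ha1 =>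
    ((zpowers_lt_iff_of_rpOut_eq hvy).mp ha).resolve_left ha1
  exact not_zpowers_lt_of_simEq
    ((hsim _ (hlt.trans hz) (pow_minFac_ne_one h1 hnp)).trans (hsim z hz h1).symm) hlt

theorem rpOut_map {π : Equiv.Perm G} (hπ : π ∈ DRPAut G) (v : G) :
    rpOut G (π v) = π '' rpOut G v := by
  ext z
  obtain ⟨z, rfl⟩ := π.surjective z
  rw [π.injective.mem_set_image]
  exact hπ v z

theorem map_one_of_mem_DRPAut {π : Equiv.Perm G} (hπ : π ∈ DRPAut G) : π 1 = 1 := by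
  by_contra h
  have h1 : (1 : G) ∈ rpOut G (π 1) := one_mem_rpOut h
  rw [rpOut_map hπ, rpOut_one, Set.image_empty] at h1
  exact h1

theorem sameOut_map {π : Equiv.Perm G} (hπ : π ∈ DRPAut G) (v : G) :
    sameOut G (π v) = π '' sameOut G v := by
  ext u
  obtain ⟨u, rfl⟩ := π.surjective u
  rw [π.injective.mem_set_image]
  change rpOut G (π u) = rpOut G (π v) ↔ rpOut G u = rpOut G v
  rw [rpOut_map hπ, rpOut_map hπ]
  exact (Set.image_injective.mpr π.injective).eq_iff

theorem simEq_map_iff {π : Equiv.Perm G} (hπ : π ∈ DRPAut G) (a b : G) :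
    simEq G (π a) (π b) ↔ simEq G a b := by
  have hadj : ∀ c d, rpAdj G (π c) (π d) ↔ rpAdj G c d := fun c d => or_congr (hπ d c) (hπ c d)
  refine ⟨fun h z => (hadj a z).symm.trans ((h (π z)).trans (hadj b z)), fun h z => ?_⟩
  obtain ⟨z, rfl⟩ := π.surjective z
  exact (hadj a z).trans ((h z).trans (hadj b z).symm)

theorem hatCls_map {π : Equiv.Perm G} (hπ : π ∈ DRPAut G) (x : G) :
    hatCls G (π x) = π '' hatCls G x := by
  ext z
  obtain ⟨z, rfl⟩ := π.surjective z
  rw [π.injective.mem_set_image]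
  exact simEq_map_iff hπ z x

theorem orderOf_map_le [Finite G] {π : Equiv.Perm G} (hπ : π ∈ DRPAut G) {v : G}
    (h : sameOut G v = genCls G v) : orderOf (π v) ≤ orderOf v :=
  calc orderOf (π v) = (genCls G (π v)).ncard + (rpOut G (π v)).ncard :=
        (card_genCls_add_card_rpOut _).symm
    _ ≤ (sameOut G (π v)).ncard + (rpOut G (π v)).ncard :=
        Nat.add_le_add_right (Set.ncard_le_ncard (genCls_subset_sameOut _)) _
    _ = (sameOut G v).ncard + (rpOut G v).ncard := by
        rw [sameOut_map hπ, rpOut_map hπ, Set.ncard_image_of_injective _ π.injective,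
          Set.ncard_image_of_injective _ π.injective]
    _ = orderOf v := by rw [h, card_genCls_add_card_rpOut]

theorem orderOf_map_eq_mul [Finite G] {π : Equiv.Perm G} (hπ : π ∈ DRPAut G) {w : G} {p q : ℕ}
    (hp : p.Prime) (hq : q.Prime) (hpq : p ≠ q) (hw : orderOf w = p * q)
    (hprime : ∀ z, zpowers z < zpowers (π w) → z ≠ 1 → (orderOf z).Prime) :
    orderOf (π w) = p * q := by
  have hle : orderOf (π w) ≤ p * q := hw ▸ orderOf_map_le hπ (sameOut_eq_genCls_of_mem_closure
    (mem_closure_rpOut_of_orderOf_eq_mul ((Nat.coprime_primes hp hq).mpr hpq) hp.ne_one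
      hq.ne_one hw))
  have hwq : zpowers (w ^ q) < zpowers w :=
    (zpowers_lt_iff_of_orderOf_eq_mul hp hq hw).mpr (Or.inr (Or.inl rfl))
  have hwp : zpowers (w ^ p) < zpowers w :=
    (zpowers_lt_iff_of_orderOf_eq_mul hp hq hw).mpr (Or.inr (Or.inr rfl))
  have hoq : orderOf (w ^ q) = p := orderOf_pow_of_orderOf_eq_mul hw hq.ne_zero
  have hop : orderOf (w ^ p) = q :=
    orderOf_pow_of_orderOf_eq_mul (hw.trans (mul_comm p q)) hp.ne_zero
  have hπwq : π (w ^ q) ≠ 1 := by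
    rw [← map_one_of_mem_DRPAut hπ, π.injective.ne_iff]
    exact fun h => hp.ne_one (by rw [← hoq, h, orderOf_one])
  obtain ⟨r, s, hr, hs, hrs⟩ := exists_orderOf_eq_prime_mul_prime hprime hπwq
    (mem_rpOut.mp (rpOut_map hπ w ▸ Set.mem_image_of_mem π hwq))
  rcases eq_or_ne r s with rfl | hne
  · have hbound : ∀ a, zpowers a < zpowers w → orderOf a ≤ r := fun a ha =>
      calc orderOf a ≤ (rpOut G w).ncard := orderOf_le_card_rpOut ha
        _ = (rpOut G (π w)).ncard := by
          rw [rpOut_map hπ, Set.ncard_image_of_injective _ π.injective]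
        _ ≤ r := card_rpOut_le_of_orderOf_eq_sq hr (hrs.trans (sq r).symm)
    have hpr := hoq ▸ hbound _ hwq
    have hqr := hop ▸ hbound _ hwp
    rw [hrs] at hle
    rcases hpq.lt_or_gt with h | h <;> nlinarith
  · refine le_antisymm hle ?_
    have := orderOf_map_le (inv_mem hπ) (sameOut_eq_genCls_of_mem_closure
      (mem_closure_rpOut_of_orderOf_eq_mul ((Nat.coprime_primes hr hs).mpr hne) hr.ne_one
        hs.ne_one hrs))
    rwa [Equiv.Perm.inv_eq_iff_eq.mpr rfl, hw] at this

theorem TypeIV.not_isCyclic {x : G} {p q : ℕ} (h : TypeIV G x p q) : ¬ IsCyclic G := by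
  obtain ⟨-, -, hpq, ⟨x₁, x₂, h₁, h₂, rfl, rfl, -⟩, hmax⟩ := h
  intro hc
  obtain ⟨g, hg⟩ := hc.exists_generator
  obtain ⟨-, hmax⟩ := hmax.resolve_left fun h => h.1 hc
  have hx : ∀ y, simEq G y x → zpowers y = zpowers g := fun y hy =>
    hmax y hy g (zpowers_le.mpr (hg y))
  exact hpq (by rw [← Nat.card_zpowers, hx x₁ h₁, ← hx x₂ h₂, Nat.card_zpowers])

theorem TypeIV.exists_rpOut_eq [Finite G] {x : G} {p q : ℕ} (h : TypeIV G x p q) :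
    ∃ w, orderOf w = p * q ∧ rpOut G w = insert 1 (hatCls G x) := by
  have hnc := h.not_isCyclic
  obtain ⟨hp, hq, hpq, ⟨x₁, x₂, h₁, h₂, rfl, rfl, hcover⟩, hmax⟩ := h
  obtain ⟨-, hnm⟩ := hmax.resolve_right fun hc => hnc hc.1
  obtain ⟨u, hu₁⟩ : ∃ u, zpowers x₁ < zpowers u := by
    simpa [IsMaxCyc, lt_iff_le_and_ne] using hnm x₁ h₁
  have hu₂ : zpowers x₂ < zpowers u := by
    refine ((h₂ u).mpr ((h₁ u).mp (Or.inl hu₁))).resolve_right fun hux₂ => hpq ?_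
    exact (Nat.prime_dvd_prime_iff_eq hp hq).mp
      (orderOf_dvd_of_mem_zpowers (zpowers_le.mp (hu₁.trans hux₂).le))
  have hx₁ := zpowers_le.mp hu₁.le
  have hx₂ := zpowers_le.mp hu₂.le
  have hw := orderOf_pow_orderOf_div (orderOf_pos u).ne'
    (((Nat.coprime_primes hp hq).mpr hpq).mul_dvd_of_dvd_of_dvd
      (orderOf_dvd_of_mem_zpowers hx₁) (orderOf_dvd_of_mem_zpowers hx₂))
  set w := u ^ (orderOf u / (orderOf x₁ * orderOf x₂))
  have hwu : w ∈ zpowers u := pow_mem (mem_zpowers u) _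
  have e₁ : zpowers (w ^ orderOf x₂) = zpowers x₁ := zpowers_eq_zpowers_of_orderOf_eq
    (pow_mem hwu _) hx₁ (orderOf_pow_of_orderOf_eq_mul hw hq.ne_zero)
  have e₂ : zpowers (w ^ orderOf x₁) = zpowers x₂ := zpowers_eq_zpowers_of_orderOf_eq
    (pow_mem hwu _) hx₂ (orderOf_pow_of_orderOf_eq_mul (hw.trans (mul_comm _ _)) hp.ne_zero)
  refine ⟨w, hw, Set.ext fun z => ?_⟩
  rw [mem_rpOut, zpowers_lt_iff_of_orderOf_eq_mul hp hq hw, e₁, e₂, Set.mem_insert_iff]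
  refine or_congr_right ⟨?_, hcover z⟩
  rintro (e | e)
  · exact (simEq_of_zpowers_eq e).trans h₁
  · exact (simEq_of_zpowers_eq e).trans h₂

theorem typeIV_of_rpOut_eq [Finite G] {v y : G} {p q : ℕ} (hp : p.Prime) (hq : q.Prime)
    (hpq : p ≠ q) (hnc : ¬ IsCyclic G) (hv : orderOf v = p * q)
    (hvy : rpOut G v = insert 1 (hatCls G y)) : TypeIV G y p q := by
  have hlt : ∀ z, simEq G z y → zpowers z < zpowers v := fun z hz =>
    (zpowers_lt_iff_of_rpOut_eq hvy).mpr (Or.inr hz)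
  have hsim : ∀ z, zpowers z < zpowers v → orderOf z ≠ 1 → simEq G z y := fun z hz h1 =>
    ((zpowers_lt_iff_of_rpOut_eq hvy).mp hz).resolve_left (mt orderOf_eq_one_iff.mpr h1)
  have hvq : orderOf (v ^ q) = p := orderOf_pow_of_orderOf_eq_mul hv hq.ne_zero
  have hvp : orderOf (v ^ p) = q :=
    orderOf_pow_of_orderOf_eq_mul (hv.trans (mul_comm p q)) hp.ne_zero
  have hsq := hsim _ ((zpowers_lt_iff_of_orderOf_eq_mul hp hq hv).mpr (Or.inr (Or.inl rfl)))
    (hvq ▸ hp.ne_one)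
  have hsp := hsim _ ((zpowers_lt_iff_of_orderOf_eq_mul hp hq hv).mpr (Or.inr (Or.inr rfl)))
    (hvp ▸ hq.ne_one)
  refine ⟨hp, hq, hpq, ⟨v ^ q, v ^ p, hsq, hsp, hvq, hvp, fun z hz => ?_⟩,
    Or.inl ⟨hnc, fun z hz hmax => (hlt z hz).ne (hmax v (hlt z hz).le)⟩⟩
  rcases (zpowers_lt_iff_of_orderOf_eq_mul hp hq hv).mp (hlt z hz) with rfl | h
  · refine absurd (one_mem_rpOut fun h1 => hp.ne_one ?_)
      (not_zpowers_lt_of_simEq (hz.trans hsq.symm))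
    rw [← hvq, h1, orderOf_one]
  · exact h

end

/-- if `x̂` is of Type IV with parameter `(p, q)` and `π` is an automorphism of
`→RP(G)`, then the `≃`-class of `x^π` is also of Type IV with parameter `(p, q)`. -/
theorem aut_DRP_typeIV {G : Type*} [Group G] [Fintype G]
    (π : Equiv.Perm G) (hπ : π ∈ DRPAut G) (x : G) (p q : ℕ) (hT : TypeIV G x p q) :
    TypeIV G (π x) p q := by
  obtain ⟨w, hw, hwx⟩ := hT.exists_rpOut_eq
  have hwπx : rpOut G (π w) = insert 1 (hatCls G (π x)) := by
    rw [rpOut_map hπ, hwx, Set.image_insert_eq, map_one_of_mem_DRPAut hπ, hatCls_map hπ]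
  have hnc := hT.not_isCyclic
  obtain ⟨hp, hq, hpq, -⟩ := hT
  exact typeIV_of_rpOut_eq hp hq hpq hnc (orderOf_map_eq_mul hπ hp hq hpq hw
    fun z hz h1 => orderOf_prime_of_rpOut_eq hwπx hz h1) hwπx
end

section
/- Let n ≥ 1 be an integer. If n is not the product of two distinct primes, then the automorphism group of the directed reduced power graph →RP(Z_n) of the cyclic group of order n is isomorphic to ∏_{d | n} S_{φ(d)}, the direct product over the positive divisors d of n of symmetric groups of degree φ(d) (φ Euler's totient function). If n = pq for distinct primes p and q, then Aut(→RP(Z_n)) is isomorphic to S_{φ(pq)} × S_{p+q-2}. -/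
open Subgroup Set

variable (G : Type*) [Group G]

/-!
In a finite cyclic group `⟨y⟩ ≤ ⟨x⟩` iff `orderOf y ∣ orderOf x`, so `x → y` is an arc of
`→RP(G)` iff `orderOf y` is a proper divisor of `orderOf x`, and every order-preserving
permutation is an automorphism.

Call `x` and `y` twins if they have the same in- and out-neighbours. Two distinct divisors of `n`
with the same proper divisors and the same proper multiples dividing `n` are primes `p ≠ q` with
`n = pq`. So unless `n = pq`, twins have equal orders, the out-neighbours of `x` together with its
twins are exactly the elements of `⟨x⟩`, and an automorphism preserves `|⟨x⟩| = orderOf x`.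

When `n = pq`, `x → y` is an arc iff `y` lies on a lower level of `1 < {orders p, q} < {order pq}`.
Automorphisms preserve out-degrees, which strictly increase with the level, so they are exactly
the level-preserving permutations.
-/

open Equiv

section FiberwisePerms

variable {α ι : Type*}

def fiberwisePerms (c : α → ι) : Subgroup (Perm α) where
  carrier := {π | ∀ a, c (π a) = c a}
  one_mem' _ := rfl
  mul_mem' hσ hτ a := (hσ _).trans (hτ a)
  inv_mem' {π} hπ a := by simpa using (hπ (π⁻¹ a)).symm

theorem mem_fiberwisePerms {c : α → ι} {π : Perm α} :
    π ∈ fiberwisePerms c ↔ ∀ a, c (π a) = c a :=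
  Iff.rfl

def fiberwisePermsMulEquiv (c : α → ι) : fiberwisePerms c ≃* ∀ i, Perm {a // c a = i} where
  toFun π i := (π : Perm α).subtypePerm fun a => by rw [π.2 a]
  invFun g := ⟨DomMulAct.stabilizerEquiv_invFun_aux g, DomMulAct.comp_stabilizerEquiv_invFun g⟩
  left_inv _ := rfl
  right_inv g := by ext i ⟨a, rfl⟩; rfl
  map_mul' _ _ := rfl

noncomputable def fiberwisePermsMulEquivPiPermFin [Finite α] (c : α → ι) {k : ι → ℕ}
    (hk : ∀ i, Nat.card {a // c a = i} = k i) : fiberwisePerms c ≃* ∀ i, Perm (Fin (k i)) :=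
  (fiberwisePermsMulEquiv c).trans <| MulEquiv.piCongrRight fun i =>
    ((Finite.equivFin _).trans (finCongr (hk i))).permCongrHom

end FiberwisePerms

def piFinThreeMulEquivProd (M : Fin 3 → Type*) [∀ i, Group (M i)] [Subsingleton (M 0)] :
    (∀ i, M i) ≃* M 2 × M 1 where
  toFun f := (f 2, f 1)
  invFun g
    | 0 => 1
    | 1 => g.2
    | 2 => g.1
  left_inv f := by
    funext i
    match i with
    | 0 => exact Subsingleton.elim _ _
    | 1 => rfl
    | 2 => rfl
  right_inv _ := rfl
  map_mul' _ _ := rfl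

namespace Nat

theorem dvd_iff_mem_properDivisors_or_eq {m n : ℕ} (hn : n ≠ 0) :
    m ∣ n ↔ m ∈ n.properDivisors ∨ m = n := by
  rw [or_comm, ← Finset.mem_insert, insert_self_properDivisors hn, mem_divisors, and_iff_left hn]

theorem le_div_minFac_of_mem_properDivisors {d f : ℕ} (hf : f ∈ d.properDivisors) :
    f ≤ d / d.minFac := by
  obtain ⟨⟨k, rfl⟩, hlt⟩ := mem_properDivisors.1 hf
  have hk : 2 ≤ k := by
    rcases k with _ | _ | k <;> simp_all
  rw [Nat.le_div_iff_mul_le (minFac_pos _)]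
  exact Nat.mul_le_mul_left f (minFac_le_of_dvd hk (dvd_mul_left k f))

theorem minFac_mem_properDivisors {d : ℕ} (hd : 1 < d) (hdp : ¬ d.Prime) :
    d.minFac ∈ d.properDivisors :=
  mem_properDivisors.2 ⟨minFac_dvd d, (minFac_le (by omega)).lt_of_ne fun h =>
    hdp (h ▸ minFac_prime hd.ne')⟩

theorem div_minFac_mem_properDivisors {d : ℕ} (hd : 1 < d) :
    d / d.minFac ∈ d.properDivisors :=
  mem_properDivisors.2
    ⟨div_dvd_of_dvd (minFac_dvd d), div_lt_self (by omega) (minFac_prime hd.ne').one_lt⟩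

/-- A composite number is the product of its least nontrivial and its greatest proper divisor. -/
theorem eq_of_properDivisors_eq_of_not_prime {d e : ℕ} (hd : 1 < d) (he : 1 < e) (hdp : ¬ d.Prime)
    (hep : ¬ e.Prime) (h : d.properDivisors = e.properDivisors) : d = e := by
  have hmin : d.minFac = e.minFac := le_antisymm
    (minFac_le_of_dvd (minFac_prime he.ne').two_le
      (mem_properDivisors.1 (h ▸ minFac_mem_properDivisors he hep)).1)
    (minFac_le_of_dvd (minFac_prime hd.ne').two_le
      (mem_properDivisors.1 (h ▸ minFac_mem_properDivisors hd hdp)).1)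
  have hmax : d / d.minFac = e / e.minFac := le_antisymm
    (le_div_minFac_of_mem_properDivisors (h ▸ div_minFac_mem_properDivisors hd))
    (le_div_minFac_of_mem_properDivisors (h ▸ div_minFac_mem_properDivisors he))
  calc d = d.minFac * (d / d.minFac) := (Nat.mul_div_cancel' (minFac_dvd d)).symm
    _ = e.minFac * (e / e.minFac) := by rw [hmax, hmin]
    _ = e := Nat.mul_div_cancel' (minFac_dvd e)

theorem eq_or_prime_of_properDivisors_eq {d e : ℕ} (hd : 1 < d) (he : 1 < e)
    (h : d.properDivisors = e.properDivisors) : d = e ∨ d.Prime ∧ e.Prime := by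
  by_cases hdp : d.Prime
  · exact Or.inr ⟨hdp, properDivisors_eq_singleton_one_iff_prime.1
      (h ▸ properDivisors_eq_singleton_one_iff_prime.2 hdp)⟩
  by_cases hep : e.Prime
  · exact absurd (properDivisors_eq_singleton_one_iff_prime.1
      (h ▸ properDivisors_eq_singleton_one_iff_prime.2 hep)) hdp
  exact Or.inl (eq_of_properDivisors_eq_of_not_prime hd he hdp hep h)

theorem eq_mul_of_forall_mem_properDivisors_iff {n p q : ℕ} (hp : p.Prime) (hq : q.Prime)
    (hpq : p ≠ q) (hpn : p ∣ n) (hqn : q ∣ n)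
    (h : ∀ f, f ∣ n → (p ∈ f.properDivisors ↔ q ∈ f.properDivisors)) : n = p * q := by
  obtain ⟨m, rfl⟩ := ((coprime_primes hp hq).2 hpq).mul_dvd_of_dvd_of_dvd hpn hqn
  suffices m = 1 by rw [this, mul_one]
  by_contra hm
  -- any prime `r ∣ m` would give `q ∣ p * r` and `p ∣ q * r`, forcing `p = r = q`
  set r := m.minFac
  have hr : r.Prime := minFac_prime hm
  have hqr : q ∣ p * r := (mem_properDivisors.1 <| (h (p * r)
    (mul_dvd_mul (dvd_mul_right p q) (minFac_dvd m))).1 <|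
      mem_properDivisors.2 ⟨dvd_mul_right p r, lt_mul_of_one_lt_right hp.pos hr.one_lt⟩).1
  have hpr : p ∣ q * r := (mem_properDivisors.1 <| (h (q * r)
    (mul_dvd_mul (dvd_mul_left q p) (minFac_dvd m))).2 <|
      mem_properDivisors.2 ⟨dvd_mul_right q r, lt_mul_of_one_lt_right hq.pos hr.one_lt⟩).1
  have hqr' : q = r := (prime_dvd_prime_iff_eq hq hr).1 <|
    (hq.dvd_mul.1 hqr).resolve_left fun h => hpq ((prime_dvd_prime_iff_eq hq hp).1 h).symm
  have hpr' : p = r := (prime_dvd_prime_iff_eq hp hr).1 <|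
    (hp.dvd_mul.1 hpr).resolve_left fun h => hpq ((prime_dvd_prime_iff_eq hp hq).1 h)
  exact hpq (hpr'.trans hqr'.symm)

theorem eq_or_prime_mul_prime_of_properDivisors_iff {n d e : ℕ} (hn : n ≠ 0) (hd : d ∣ n)
    (he : e ∣ n) (h : ∀ f, f ∣ n → (f ∈ d.properDivisors ↔ f ∈ e.properDivisors) ∧
      (d ∈ f.properDivisors ↔ e ∈ f.properDivisors)) :
    d = e ∨ d.Prime ∧ e.Prime ∧ d ≠ e ∧ n = d * e := by
  rcases eq_or_ne d e with hde | hde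
  · exact Or.inl hde
  have hd0 : 0 < d := pos_of_dvd_of_pos hd (Nat.pos_of_ne_zero hn)
  have he0 : 0 < e := pos_of_dvd_of_pos he (Nat.pos_of_ne_zero hn)
  have hde' : ¬ d ∣ e := fun hde' => self_notMem_properDivisors <|
    (h e he).2.1 (mem_properDivisors.2 ⟨hde', (le_of_dvd he0 hde').lt_of_ne hde⟩)
  have hed' : ¬ e ∣ d := fun hed' => self_notMem_properDivisors <|
    (h d hd).2.2 (mem_properDivisors.2 ⟨hed', (le_of_dvd hd0 hed').lt_of_ne hde.symm⟩)
  have hPD : d.properDivisors = e.properDivisors := by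
    ext f
    by_cases hf : f ∣ n
    · exact (h f hf).1
    · exact iff_of_false (fun hf' => hf ((mem_properDivisors.1 hf').1.trans hd))
        (fun hf' => hf ((mem_properDivisors.1 hf').1.trans he))
  obtain ⟨hdp, hep⟩ := (eq_or_prime_of_properDivisors_eq
    (lt_of_le_of_ne hd0 fun h => hde' (h ▸ one_dvd e))
    (lt_of_le_of_ne he0 fun h => hed' (h ▸ one_dvd d)) hPD).resolve_left hde
  exact Or.inr ⟨hdp, hep, hde, eq_mul_of_forall_mem_properDivisors_iff hdp hep hde hd he
    fun f hf => (h f hf).2⟩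

theorem eq_one_or_left_or_right_or_mul_of_dvd_mul {p q d : ℕ} (hp : p.Prime) (hq : q.Prime)
    (hd : d ∣ p * q) :
    d = 1 ∨ d = p ∨ d = q ∨ d = p * q := by
  obtain ⟨a, b, ha, hb, rfl⟩ := Nat.dvd_mul.1 hd
  rcases (dvd_prime hp).1 ha with rfl | rfl <;> rcases (dvd_prime hq).1 hb with rfl | rfl <;> simp

theorem mem_properDivisors_iff_of_dvd_mul {p q d e : ℕ} (hp : p.Prime) (hq : q.Prime)
    (hd : d ∣ p * q) (he : e ∣ p * q) :
    e ∈ d.properDivisors ↔ e = 1 ∧ d ≠ 1 ∨ e ≠ p * q ∧ d = p * q := by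
  have hn : 0 < p * q := mul_pos hp.pos hq.pos
  rw [mem_properDivisors]
  constructor
  · rintro ⟨hed, hlt⟩
    by_cases hdn : d = p * q
    · exact Or.inr ⟨(hlt.trans_eq hdn).ne, hdn⟩
    have hdp : d.Prime := by
      rcases eq_one_or_left_or_right_or_mul_of_dvd_mul hp hq hd with rfl | rfl | rfl | rfl
      · have := eq_one_of_dvd_one hed
        omega
      · exact hp
      · exact hq
      · exact absurd rfl hdn
    exact Or.inl ⟨((dvd_prime hdp).1 hed).resolve_right hlt.ne, hdp.ne_one⟩
  · rintro (⟨rfl, hd1⟩ | ⟨hen, rfl⟩)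
    · exact ⟨one_dvd d, lt_of_le_of_ne (Nat.pos_of_dvd_of_pos hd hn) (Ne.symm hd1)⟩
    · exact ⟨he, (le_of_dvd hn he).lt_of_ne hen⟩

end Nat

def rpTwin (x y : G) : Prop := ∀ z, (rpArc G x z ↔ rpArc G y z) ∧ (rpArc G z x ↔ rpArc G z y)

section DRPAut

variable {G}

theorem rpTwin_apply_iff {π : Perm G} (hπ : π ∈ DRPAut G) {x y : G} :
    rpTwin G (π x) (π y) ↔ rpTwin G x y := by
  rw [rpTwin, ← π.forall_congr_right]
  simp only [hπ _ _]
  rfl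

theorem fiberwisePerms_le_DRPAut {ι : Type*} {c : G → ι} {R : ι → ι → Prop}
    (h : ∀ x y, rpArc G x y ↔ R (c x) (c y)) : fiberwisePerms c ≤ DRPAut G := fun π hπ x y => by
  rw [h, h, hπ x, hπ y]

theorem apply_eq_of_mem_DRPAut {β : Type*} [LinearOrder β] [Finite G] {c : G → β}
    (hc : ∀ x y, rpArc G x y ↔ c y < c x) {π : Perm G} (hπ : π ∈ DRPAut G) (x : G) :
    c (π x) = c x := by
  have hdeg : Nat.card {y // c y < c (π x)} = Nat.card {y // c y < c x} :=
    Nat.card_congr (π.subtypeEquiv fun y => by rw [← hc, ← hc, hπ]).symm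
  have hmono : ∀ {x x' : G}, c x < c x' →
      Nat.card {y // c y < c x} < Nat.card {y // c y < c x'} := by
    intro x x' hlt
    have := Set.ncard_lt_ncard (s := {y | c y < c x}) (t := {y | c y < c x'})
      ⟨fun y (hy : c y < c x) => hy.trans hlt, fun hsub => lt_irrefl (c x) (hsub hlt)⟩
      (Set.toFinite _)
    rwa [← Nat.card_coe_set_eq, ← Nat.card_coe_set_eq] at this
  rcases lt_trichotomy (c (π x)) (c x) with h | h | h
  · exact absurd hdeg (hmono h).ne
  · exact h
  · exact absurd hdeg (hmono h).ne'

end DRPAut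

section IsCyclic

variable {G} [Fintype G] [IsCyclic G]

theorem IsCyclic.mem_zpowers_iff_orderOf_dvd {x y : G} :
    y ∈ zpowers x ↔ orderOf y ∣ orderOf x := by
  classical
  refine ⟨orderOf_dvd_of_mem_zpowers, fun h => ?_⟩
  -- `⟨x⟩` has `orderOf x` elements, all roots of `a ^ orderOf x = 1`, which has at most that many
  have hsub : (zpowers x : Set G).toFinset ⊆ Finset.univ.filter (· ^ orderOf x = 1) :=
    fun a ha => by
      simpa [orderOf_dvd_iff_pow_eq_one] using orderOf_dvd_of_mem_zpowers (Set.mem_toFinset.1 ha)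
  have heq := Finset.eq_of_subset_of_card_le hsub <| by
    rw [Set.toFinset_card, ← Nat.card_eq_fintype_card, SetLike.coe_sort_coe, Nat.card_zpowers]
    exact IsCyclic.card_pow_eq_one_le (orderOf_pos x)
  have hy : y ∈ Finset.univ.filter (· ^ orderOf x = 1) := by
    simpa using orderOf_dvd_iff_pow_eq_one.1 h
  rw [← heq] at hy
  simpa using hy

theorem rpArc_iff_orderOf_mem_properDivisors {x y : G} :
    rpArc G x y ↔ orderOf y ∈ (orderOf x).properDivisors := by
  rw [rpArc, lt_iff_le_not_ge, zpowers_le, zpowers_le, IsCyclic.mem_zpowers_iff_orderOf_dvd,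
    IsCyclic.mem_zpowers_iff_orderOf_dvd, Nat.mem_properDivisors]
  refine and_congr_right fun h => ⟨fun h' => (Nat.le_of_dvd (orderOf_pos x) h).lt_of_ne
    fun e => h' (e ▸ dvd_rfl), fun h' h'' => (Nat.le_of_dvd (orderOf_pos y) h'').not_gt h'⟩

theorem IsCyclic.card_orderOf_eq {d : ℕ} (hd : d ∣ Fintype.card G) :
    Nat.card {x : G // orderOf x = d} = d.totient := by
  classical
  rw [Nat.card_eq_fintype_card, Fintype.card_subtype, IsCyclic.card_orderOf_eq_totient hd]

theorem IsCyclic.exists_orderOf_eq {d : ℕ} (hd : d ∣ Fintype.card G) :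
    ∃ x : G, orderOf x = d := by
  obtain ⟨⟨x, hx⟩⟩ := (Nat.card_pos_iff.1 <| (card_orderOf_eq hd).symm ▸
    Nat.totient_pos.2 (Nat.pos_of_dvd_of_pos hd Fintype.card_pos)).1
  exact ⟨x, hx⟩

section NotProductOfTwoPrimes

variable (hn : ¬ ∃ p q : ℕ, p.Prime ∧ q.Prime ∧ p ≠ q ∧ Fintype.card G = p * q)
include hn

theorem rpTwin_iff_orderOf_eq {x y : G} : rpTwin G x y ↔ orderOf x = orderOf y := by
  refine ⟨fun h => ?_, fun h z => by simp only [rpArc_iff_orderOf_mem_properDivisors, h, and_self]⟩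
  refine (Nat.eq_or_prime_mul_prime_of_properDivisors_iff Fintype.card_ne_zero orderOf_dvd_card
    orderOf_dvd_card fun f hf => ?_).resolve_right fun ⟨hp, hq, hpq, hpq'⟩ =>
      hn ⟨_, _, hp, hq, hpq, hpq'⟩
  obtain ⟨z, rfl⟩ := IsCyclic.exists_orderOf_eq hf
  simpa only [rpArc_iff_orderOf_mem_properDivisors] using h z

theorem mem_zpowers_iff_rpArc_or_rpTwin {x y : G} :
    y ∈ zpowers x ↔ rpArc G x y ∨ rpTwin G x y := by
  rw [IsCyclic.mem_zpowers_iff_orderOf_dvd, rpArc_iff_orderOf_mem_properDivisors,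
    rpTwin_iff_orderOf_eq hn, eq_comm, Nat.dvd_iff_mem_properDivisors_or_eq (orderOf_pos x).ne']

theorem mem_DRPAut_iff_forall_orderOf_apply {π : Perm G} :
    π ∈ DRPAut G ↔ ∀ x, orderOf (π x) = orderOf x := by
  refine ⟨fun hπ x => ?_, fun h x y => ?_⟩
  · rw [← Nat.card_zpowers, ← Nat.card_zpowers]
    refine Nat.card_congr (π.subtypeEquiv fun y => ?_).symm
    rw [mem_zpowers_iff_rpArc_or_rpTwin hn, mem_zpowers_iff_rpArc_or_rpTwin hn, hπ,
      rpTwin_apply_iff hπ]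
  · rw [rpArc_iff_orderOf_mem_properDivisors, rpArc_iff_orderOf_mem_properDivisors, h, h]

end NotProductOfTwoPrimes

end IsCyclic

section ProductOfTwoPrimes

variable {G} [Fintype G]

noncomputable def orderLevel (x : G) : Fin 3 :=
  if orderOf x = 1 then 0 else if orderOf x = Fintype.card G then 2 else 1

theorem orderLevel_eq_zero_iff {x : G} : orderLevel x = 0 ↔ x = 1 := by
  rw [← orderOf_eq_one_iff, orderLevel]
  split_ifs with h <;> simp [h]

variable {p q : ℕ} (hp : p.Prime) (hq : q.Prime) (hcard : Fintype.card G = p * q)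
include hp hq hcard

theorem orderLevel_eq_two_iff {x : G} : orderLevel x = 2 ↔ orderOf x = p * q := by
  have := hp.one_lt.trans (lt_mul_of_one_lt_right hp.pos hq.one_lt)
  rw [orderLevel, hcard]
  split_ifs with h <;> simp [h] <;> omega

theorem orderLevel_eq_one_iff (hpq : p ≠ q) {x : G} :
    orderLevel x = 1 ↔ orderOf x = p ∨ orderOf x = q := by
  have hp' := lt_mul_of_one_lt_right hp.pos hq.one_lt
  have hq' := lt_mul_of_one_lt_left hq.pos hp.one_lt
  rw [orderLevel, hcard]
  rcases Nat.eq_one_or_left_or_right_or_mul_of_dvd_mul hp hq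
    (hcard ▸ orderOf_dvd_card (x := x)) with h | h | h | h <;>
  simp [h, hp.ne_one, hq.ne_one, hp.ne_one.symm, hq.ne_one.symm, hpq, hpq.symm, hp'.ne, hq'.ne,
    hp'.ne', hq'.ne']

variable [IsCyclic G]

theorem rpArc_iff_orderLevel_lt {x y : G} : rpArc G x y ↔ orderLevel y < orderLevel x := by
  have hlt : ∀ a b : Fin 3, a < b ↔ a = 0 ∧ b ≠ 0 ∨ a ≠ 2 ∧ b = 2 := by decide
  rw [hlt, rpArc_iff_orderOf_mem_properDivisors, Nat.mem_properDivisors_iff_of_dvd_mul hp hq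
    (hcard ▸ orderOf_dvd_card) (hcard ▸ orderOf_dvd_card)]
  simp only [ne_eq, orderLevel_eq_zero_iff, orderLevel_eq_two_iff hp hq hcard, orderOf_eq_one_iff]

theorem DRPAut_eq_fiberwisePerms_orderLevel :
    DRPAut G = fiberwisePerms (orderLevel (G := G)) :=
  le_antisymm
    (fun _ hπ => apply_eq_of_mem_DRPAut (fun _ _ => rpArc_iff_orderLevel_lt hp hq hcard) hπ)
    (fiberwisePerms_le_DRPAut (R := fun a b => b < a) fun _ _ =>
      rpArc_iff_orderLevel_lt hp hq hcard)

theorem card_orderLevel_eq_two : Nat.card {x : G // orderLevel x = 2} = (p * q).totient := by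
  rw [← IsCyclic.card_orderOf_eq (dvd_of_eq hcard.symm)]
  exact Nat.card_congr (Equiv.subtypeEquivRight fun x => orderLevel_eq_two_iff hp hq hcard)

theorem card_orderLevel_eq_one (hpq : p ≠ q) :
    Nat.card {x : G // orderLevel x = 1} = p + q - 2 := by
  classical
  have hdisj : Disjoint (fun x : G => orderOf x = p) (fun x => orderOf x = q) :=
    fun _ hp' hq' x hx => hpq ((hp' x hx).symm.trans (hq' x hx))
  rw [Nat.card_congr ((Equiv.subtypeEquivRight fun x => orderLevel_eq_one_iff hp hq hcard hpq).trans
      (subtypeOrEquiv _ _ hdisj)), Nat.card_sum,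
    IsCyclic.card_orderOf_eq (hcard ▸ dvd_mul_right p q),
    IsCyclic.card_orderOf_eq (hcard ▸ dvd_mul_left q p), Nat.totient_prime hp, Nat.totient_prime hq]
  have := hp.two_le
  have := hq.two_le
  omega

end ProductOfTwoPrimes

theorem aut_DRP_cyclic_general (n : ℕ) {G : Type*} [Group G] [Fintype G]
    (hG : IsCyclic G) (hcard : Fintype.card G = n) :
    ((¬ ∃ p q : ℕ, p.Prime ∧ q.Prime ∧ p ≠ q ∧ n = p * q) →
      Nonempty (DRPAut G ≃*
        ((d : n.divisors) → Equiv.Perm (Fin (Nat.totient (d : ℕ)))))) ∧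
    (∀ p q : ℕ, p.Prime → q.Prime → p ≠ q → n = p * q →
      Nonempty (DRPAut G ≃*
        Equiv.Perm (Fin (Nat.totient (p * q))) × Equiv.Perm (Fin (p + q - 2)))) := by
  subst hcard
  refine ⟨fun hn => ⟨?_⟩, fun p q hp hq hpq hn => ⟨?_⟩⟩
  · let c (x : G) : (Fintype.card G).divisors :=
      ⟨orderOf x, Nat.mem_divisors.2 ⟨orderOf_dvd_card, Fintype.card_ne_zero⟩⟩
    have hc : DRPAut G = fiberwisePerms c := by
      ext π
      simp only [mem_DRPAut_iff_forall_orderOf_apply hn, mem_fiberwisePerms, c, Subtype.ext_iff]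
    refine (MulEquiv.subgroupCongr hc).trans (fiberwisePermsMulEquivPiPermFin c fun d => ?_)
    rw [← IsCyclic.card_orderOf_eq (Nat.dvd_of_mem_divisors d.2)]
    exact Nat.card_congr (Equiv.subtypeEquivRight fun x => Subtype.ext_iff)
  · have : Subsingleton {x : G // orderLevel x = 0} := ⟨fun x y =>
      Subtype.ext ((orderLevel_eq_zero_iff.1 x.2).trans (orderLevel_eq_zero_iff.1 y.2).symm)⟩
    exact (MulEquiv.subgroupCongr (DRPAut_eq_fiberwisePerms_orderLevel hp hq hn)).trans <|
      (fiberwisePermsMulEquiv _).trans <| (piFinThreeMulEquivProd _).trans <|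
        MulEquiv.prodCongr
          ((Finite.equivFin _).trans (finCongr (card_orderLevel_eq_two hp hq hn))).permCongrHom
          ((Finite.equivFin _).trans (finCongr (card_orderLevel_eq_one hp hq hn hpq))).permCongrHom

/-- for the cyclic group of order `n ≥ 1`:
if `n` is not a product of two distinct primes then
`Aut(→RP(ℤ_n)) ≅ ∏_{d ∣ n} S_{φ(d)}`; and if `n = pq` with `p ≠ q` prime then
`Aut(→RP(ℤ_n)) ≅ S_{φ(pq)} × S_{p+q-2}`. -/
theorem aut_DRP_cyclic (n : ℕ) (hn : 1 ≤ n) {G : Type*} [Group G] [Fintype G]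
    (hG : IsCyclic G) (hcard : Fintype.card G = n) :
    ((¬ ∃ p q : ℕ, p.Prime ∧ q.Prime ∧ p ≠ q ∧ n = p * q) →
      Nonempty (DRPAut G ≃*
        ((d : n.divisors) → Equiv.Perm (Fin (Nat.totient (d : ℕ)))))) ∧
    (∀ p q : ℕ, p.Prime → q.Prime → p ≠ q → n = p * q →
      Nonempty (DRPAut G ≃*
        Equiv.Perm (Fin (Nat.totient (p * q))) × Equiv.Perm (Fin (p + q - 2)))) :=
  aut_DRP_cyclic_general n hG hcard
end

section
/- Let p, q be distinct primes and let G be a finite group such that either (i) G is a p-group of exponent p with G not isomorphic to Z_2, or (ii) G is a non-nilpotent group of order p^m q in which every non-identity element has order p or q. Then Aut(→RP(G)) = Aut(RP(G)) and this group is isomorphic to the symmetric group of degree |G| - 1. -/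
open Subgroup Set

variable (G : Type*) [Group G]

/-! When every non-identity element has prime order, a proper inclusion `⟨a⟩ ⊊ ⟨b⟩` of cyclic
subgroups forces `a = 1`. So `RP(G)` is the star graph centred at `1`, and `→RP(G)` has exactly
the arcs from the other vertices to `1`. The automorphisms of either are then the permutations
fixing `1`; for the undirected star this needs `|G| ≠ 2`, since `K₂` has a symmetry swapping
its centre with the leaf. -/

namespace Equiv.Perm

variable {α : Type*}

theorem apply_eq_iff_eq_of_map_eq {c : α} {π : Perm α} (hc : π c = c) (x : α) :
    π x = c ↔ x = c := by
  nth_rewrite 1 [← hc]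
  exact π.apply_eq_iff_eq

theorem range_ofSubtype_ne_eq_stabilizer [DecidableEq α] (c : α) :
    (ofSubtype : Perm {x // x ≠ c} →* Perm α).range = MulAction.stabilizer (Perm α) c := by
  ext π
  rw [MulAction.mem_stabilizer_iff, Perm.smul_def]
  constructor
  · rintro ⟨σ, rfl⟩
    exact ofSubtype_apply_of_not_mem σ (not_not.2 rfl)
  · intro hc
    have hne : ∀ x, π x ≠ c ↔ x ≠ c := fun x =>
      (apply_eq_iff_eq_of_map_eq hc x).not
    refine ⟨π.subtypePerm hne, ofSubtype_subtypePerm hne fun x hx hxc => ?_⟩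
    exact hx (hxc ▸ hc)

noncomputable def stabilizerMulEquivPermNe [DecidableEq α] (c : α) :
    MulAction.stabilizer (Perm α) c ≃* Perm {x // x ≠ c} :=
  ((MonoidHom.ofInjective ofSubtype_injective).trans
    (MulEquiv.subgroupCongr (range_ofSubtype_ne_eq_stabilizer c))).symm

theorem preserves_arcs_to_iff {c : α} (π : Perm α) :
    (∀ x y, (π x ≠ c ∧ π y = c ↔ x ≠ c ∧ y = c)) ↔ π c = c := by
  constructor
  · intro h
    by_contra hπ
    have hsymm : π.symm c ≠ c := fun e => hπ (π.symm_apply_eq.1 e).symm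
    exact (h (π.symm c) c).2 ⟨hsymm, rfl⟩ |>.1 (apply_symm_apply π c)
  · intro hc x y
    simp only [ne_eq, apply_eq_iff_eq_of_map_eq hc]

theorem preserves_starGraph_iff [Fintype α] {c : α} (hα : Fintype.card α ≠ 2) (π : Perm α) :
    (∀ x y, (SimpleGraph.starGraph c).Adj (π x) (π y) ↔ (SimpleGraph.starGraph c).Adj x y) ↔
      π c = c := by
  classical
  constructor
  · intro h
    by_contra hπ
    have leaf_to_centre : ∀ x, x ≠ c → π x = c := fun x hx => by
      have := (h c x).2 (SimpleGraph.starGraph_center_adj (Ne.symm hx))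
      rw [SimpleGraph.starGraph_adj] at this
      exact this.2.resolve_left hπ
    have hsymm : π.symm c ≠ c := fun e => hπ (π.symm_apply_eq.1 e).symm
    have hleaves : Fintype.card {x // x ≠ c} = 1 :=
      Fintype.card_eq_one_iff.2 ⟨⟨π.symm c, hsymm⟩, fun ⟨y, hy⟩ =>
        Subtype.ext (π.injective (by rw [leaf_to_centre y hy, apply_symm_apply]))⟩
    have : Fintype.card {x // x ≠ c} = Fintype.card α - 1 := by simp
    have : 0 < Fintype.card α := Fintype.card_pos_iff.2 ⟨c⟩
    omega
  · intro hc x y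
    simp only [SimpleGraph.starGraph_adj, apply_eq_iff_eq_of_map_eq hc, π.injective.ne_iff]

end Equiv.Perm

section

variable {G}

theorem zpowers_lt_zpowers_iff_of_orderOf_prime (hG : ∀ g : G, g ≠ 1 → (orderOf g).Prime)
    {a b : G} : zpowers a < zpowers b ↔ a = 1 ∧ b ≠ 1 := by
  constructor
  · intro hab
    have hb : b ≠ 1 := by
      rintro rfl
      exact not_lt_bot (zpowers_one_eq_bot (G := G) ▸ hab)
    refine ⟨by_contra fun ha => hab.ne ?_, hb⟩
    have hdvd : orderOf a ∣ orderOf b := orderOf_dvd_of_mem_zpowers (hab.le (mem_zpowers a))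
    have horder : orderOf a = orderOf b := (Nat.prime_dvd_prime_iff_eq (hG a ha) (hG b hb)).1 hdvd
    have : Finite (zpowers b) := Nat.finite_of_card_ne_zero (by
      rw [Nat.card_zpowers]; exact (hG b hb).ne_zero)
    exact eq_of_le_of_card_ge hab.le (by rw [Nat.card_zpowers, Nat.card_zpowers, horder])
  · rintro ⟨rfl, hb⟩
    rw [zpowers_one_eq_bot, bot_lt_iff_ne_bot, Ne, zpowers_eq_bot]
    exact hb

theorem rpArc_iff_of_orderOf_prime (hG : ∀ g : G, g ≠ 1 → (orderOf g).Prime) (x y : G) :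
    rpArc G x y ↔ x ≠ 1 ∧ y = 1 :=
  (zpowers_lt_zpowers_iff_of_orderOf_prime hG).trans and_comm

theorem rpAdj_iff_starGraph_adj (hG : ∀ g : G, g ≠ 1 → (orderOf g).Prime) (x y : G) :
    rpAdj G x y ↔ (SimpleGraph.starGraph 1).Adj x y := by
  rw [rpAdj, zpowers_lt_zpowers_iff_of_orderOf_prime hG,
    zpowers_lt_zpowers_iff_of_orderOf_prime hG, SimpleGraph.starGraph_adj]
  grind

theorem DRPAut_eq_stabilizer_one (hG : ∀ g : G, g ≠ 1 → (orderOf g).Prime) :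
    DRPAut G = MulAction.stabilizer (Equiv.Perm G) (1 : G) := by
  ext π
  rw [MulAction.mem_stabilizer_iff, Equiv.Perm.smul_def, ← π.preserves_arcs_to_iff]
  exact forall₂_congr fun x y => by
    rw [rpArc_iff_of_orderOf_prime hG, rpArc_iff_of_orderOf_prime hG]

theorem RPAut_eq_stabilizer_one [Fintype G] (hG : ∀ g : G, g ≠ 1 → (orderOf g).Prime)
    (hcard : Fintype.card G ≠ 2) :
    RPAut G = MulAction.stabilizer (Equiv.Perm G) (1 : G) := by
  ext π
  rw [MulAction.mem_stabilizer_iff, Equiv.Perm.smul_def, ← π.preserves_starGraph_iff hcard]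
  exact forall₂_congr fun x y => by
    rw [rpAdj_iff_starGraph_adj hG, rpAdj_iff_starGraph_adj hG]

theorem card_ne_two_of_not_isNilpotent [Fintype G] (hG : ¬ Group.IsNilpotent G) :
    Fintype.card G ≠ 2 := fun h2 =>
  hG (IsPGroup.of_card (p := 2) (n := 1) (by rw [Nat.card_eq_fintype_card, h2, pow_one])).isNilpotent

end

theorem aut_RP_symmetric_general {G : Type*} [Group G] [Fintype G] (p q : ℕ)
    (hp : p.Prime) (hq : q.Prime)
    (hG : (IsPGroup p G ∧ (∀ g : G, g ≠ 1 → orderOf g = p) ∧ Fintype.card G ≠ 2) ∨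
          (¬ Group.IsNilpotent G ∧ (∃ m : ℕ, Fintype.card G = p ^ m * q) ∧
            ∀ g : G, g ≠ 1 → orderOf g = p ∨ orderOf g = q)) :
    DRPAut G = RPAut G ∧
    Nonempty (DRPAut G ≃* Equiv.Perm (Fin (Fintype.card G - 1))) := by
  classical
  have hprime : ∀ g : G, g ≠ 1 → (orderOf g).Prime := by
    rcases hG with ⟨-, hord, -⟩ | ⟨-, -, hord⟩
    · exact fun g hg => hord g hg ▸ hp
    · exact fun g hg => (hord g hg).elim (· ▸ hp) (· ▸ hq)
  have hcard : Fintype.card G ≠ 2 := hG.elim (·.2.2) (card_ne_two_of_not_isNilpotent ·.1)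
  have hnonid : Fintype.card {x : G // x ≠ 1} = Fintype.card G - 1 := by simp
  rw [DRPAut_eq_stabilizer_one hprime, RPAut_eq_stabilizer_one hprime hcard]
  exact ⟨rfl, ⟨(Equiv.Perm.stabilizerMulEquivPermNe 1).trans
    (Fintype.equivFinOfCardEq hnonid).permCongrHom⟩⟩

/-- if `G` is a `p`-group of exponent `p` not isomorphic to `ℤ₂`, or a
non-nilpotent group of order `p^m q` all of whose non-identity elements have order `p` or `q`
(`p ≠ q` primes), then `Aut(→RP(G)) = Aut(RP(G)) ≅ S_{|G| - 1}`. -/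
theorem aut_RP_symmetric {G : Type*} [Group G] [Fintype G] (p q : ℕ)
    (hp : p.Prime) (hq : q.Prime) (hpq : p ≠ q)
    (hG : (IsPGroup p G ∧ (∀ g : G, g ≠ 1 → orderOf g = p) ∧ Fintype.card G ≠ 2) ∨
          (¬ Group.IsNilpotent G ∧ (∃ m : ℕ, Fintype.card G = p ^ m * q) ∧
            ∀ g : G, g ≠ 1 → orderOf g = p ∨ orderOf g = q)) :
    DRPAut G = RPAut G ∧
    Nonempty (DRPAut G ≃* Equiv.Perm (Fin (Fintype.card G - 1))) :=
  aut_RP_symmetric_general p q hp hq hG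
end
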